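/- Fix ρ ∈ (0,1). Define h(z) = (−ρ + 5(ρ−1)z³ + 5(ρ−1)z² + 15ρz + z + 1)/(16(−ρ+z+1)) for z ∈ [ρ/2, ρ]. Then h is non-decreasing on [ρ/2, ρ], and therefore sup_{z∈[ρ/2,ρ]} h(z) = h(ρ) = ((1+ρ)/2)^5 + ((1−ρ)/2)^5. -/

import Mathlib

/-!
On `z > ρ - 1` one has `h'(z) = 5 φ(z) / (16 (1 - ρ + z)²)` with `φ = hDerivNum ρ`, and
`φ(z) - φ(ρ) = (1 - ρ)(ρ - z) q(z)` where `q(z) = 2z² - ρz - ρ² + 4z + 2ρ + 2` is positive for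
`0 ≤ z ≤ ρ ≤ 1`. Hence `φ(z) ≥ φ(ρ) = ρ (1 - ρ)³ ≥ 0` there, and `h` is non-decreasing on
`[0, ρ] ⊇ [ρ/2, ρ]`.
-/

noncomputable def h (ρ z : ℝ) : ℝ :=
  (-ρ + 5 * (ρ - 1) * z ^ 3 + 5 * (ρ - 1) * z ^ 2 + 15 * ρ * z + z + 1) /
    (16 * (-ρ + z + 1))

open Set

def hDerivNum (ρ z : ℝ) : ℝ :=
  -3 * (ρ - 1) * ρ + 2 * (ρ - 1) * z ^ 3 + (-3 * ρ ^ 2 + 7 * ρ - 4) * z ^ 2 - 2 * (ρ - 1) ^ 2 * z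

theorem hasDerivAt_h {ρ z : ℝ} (hz : -ρ + z + 1 ≠ 0) :
    HasDerivAt (h ρ) (5 * hDerivNum ρ z / (16 * (-ρ + z + 1) ^ 2)) z := by
  have hnum : HasDerivAt
      (fun z => -ρ + 5 * (ρ - 1) * z ^ 3 + 5 * (ρ - 1) * z ^ 2 + 15 * ρ * z + z + 1)
      (15 * (ρ - 1) * z ^ 2 + 10 * (ρ - 1) * z + 15 * ρ + 1) z := by
    refine (((((((hasDerivAt_id z).pow 3).const_mul (5 * (ρ - 1))).const_add (-ρ)).add
      (((hasDerivAt_id z).pow 2).const_mul (5 * (ρ - 1)))).add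
      ((hasDerivAt_id z).const_mul (15 * ρ))).add (hasDerivAt_id z) |>.add_const 1).congr_deriv ?_
    simp only [id]
    ring
  have hden : HasDerivAt (fun z => 16 * (-ρ + z + 1)) 16 z :=
    (((hasDerivAt_id z).const_add (-ρ)).add_const 1).const_mul 16 |>.congr_deriv (mul_one 16)
  refine (hnum.div hden (by positivity)).congr_deriv ?_
  rw [hDerivNum]
  field_simp
  ring

theorem hDerivNum_self (ρ : ℝ) : hDerivNum ρ ρ = ρ * (1 - ρ) ^ 3 := by
  rw [hDerivNum]
  ring

theorem hDerivNum_sub_hDerivNum_self (ρ z : ℝ) :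
    hDerivNum ρ z - hDerivNum ρ ρ =
      (1 - ρ) * (ρ - z) * (2 * z ^ 2 - ρ * z - ρ ^ 2 + 4 * z + 2 * ρ + 2) := by
  simp only [hDerivNum]
  ring

theorem hDerivNum_nonneg {ρ z : ℝ} (hρ : ρ ≤ 1) (hz : z ∈ Icc 0 ρ) : 0 ≤ hDerivNum ρ z := by
  obtain ⟨hz₀, hzρ⟩ := hz
  have hquad : 0 ≤ 2 * z ^ 2 - ρ * z - ρ ^ 2 + 4 * z + 2 * ρ + 2 := by nlinarith
  have hdiff : 0 ≤ hDerivNum ρ z - hDerivNum ρ ρ := by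
    rw [hDerivNum_sub_hDerivNum_self]
    exact mul_nonneg (mul_nonneg (by linarith) (by linarith)) hquad
  have hself : 0 ≤ hDerivNum ρ ρ := by
    rw [hDerivNum_self]
    exact mul_nonneg (by linarith) (pow_nonneg (by linarith) 3)
  linarith

theorem monotoneOn_h {ρ : ℝ} (hρ : ρ < 1) : MonotoneOn (h ρ) (Icc 0 ρ) := by
  have hden {z : ℝ} (hz : z ∈ Icc 0 ρ) : 0 < -ρ + z + 1 := by linarith [hz.1]
  have hderiv {z : ℝ} (hz : z ∈ Icc 0 ρ) :
      HasDerivAt (h ρ) (5 * hDerivNum ρ z / (16 * (-ρ + z + 1) ^ 2)) z :=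
    hasDerivAt_h (hden hz).ne'
  refine monotoneOn_of_hasDerivWithinAt_nonneg (convex_Icc 0 ρ)
    (fun z hz => (hderiv hz).continuousAt.continuousWithinAt)
    (fun z hz => (hderiv (interior_subset hz)).hasDerivWithinAt) (fun z hz => ?_)
  have hφ := hDerivNum_nonneg hρ.le (interior_subset hz)
  positivity

theorem h_self (ρ : ℝ) : h ρ ρ = ((1 + ρ) / 2) ^ 5 + ((1 - ρ) / 2) ^ 5 := by
  rw [h, div_eq_iff (by norm_num)]
  ring

/-- For `ρ ∈ (0,1)`, `h` is non-decreasing on `[ρ/2, ρ]`, so its supremum there is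
`h(ρ) = ((1+ρ)/2)⁵ + ((1−ρ)/2)⁵`. -/
theorem stmt8 (ρ : ℝ) (hρ : ρ ∈ Set.Ioo (0 : ℝ) 1) :
    MonotoneOn (h ρ) (Set.Icc (ρ / 2) ρ) ∧
    (∀ z ∈ Set.Icc (ρ / 2) ρ, h ρ z ≤ h ρ ρ) ∧
    h ρ ρ = ((1 + ρ) / 2) ^ 5 + ((1 - ρ) / 2) ^ 5 := by
  have hmono : MonotoneOn (h ρ) (Icc (ρ / 2) ρ) :=
    (monotoneOn_h hρ.2).mono (Icc_subset_Icc (by linarith [hρ.1]) le_rfl)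
  have hρ_mem : ρ ∈ Icc (ρ / 2) ρ := ⟨by linarith [hρ.1], le_rfl⟩
  exact ⟨hmono, fun z hz => hmono hz hρ_mem hz.2, h_self ρ⟩
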